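/- arXiv:2209.12540 — 2 statements merged into one kernel-verified Lean document; each statement's English description precedes it below -/
import Mathlib

section
/- For a finite real reflection group W with Coxeter element c, the map w ↦ c_+ w c_- is an involutive anti-automorphism of the noncrossing partition lattice NC(W,c), where c = c_+ c_- is a bipartite factorization of the Coxeter element. -/
/-!
Because the reflections in each of `S₊`, `S₋` commute pairwise, `c₊` and `c₋` are involutions.
Hence `(c₊ w c₋)⁻¹ = c₋ (w⁻¹ c) c₋⁻¹` and `(c₊ v c₋)⁻¹ (c₊ u c₋) = c₋⁻¹ (u⁻¹ v)⁻¹ c₋`, and since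
`ℓ_T` is invariant under inversion and conjugation,
`ℓ_T(c₊ w c₋) = ℓ_T(w⁻¹ c)` and `ℓ_T((c₊ v c₋)⁻¹ (c₊ u c₋)) = ℓ_T(u⁻¹ v)`.
With these two identities the defining equations of `w ≤ c` and `u ≤ v ≤ c` turn into those of
`c₊ w c₋ ≤ c` and `c₊ v c₋ ≤ c₊ u c₋` by linear arithmetic.
-/

namespace Stmt4

variable {W : Type*} [Group W] {n : ℕ} {M : CoxeterMatrix (Fin n)} (cs : CoxeterSystem M W)

/-- The reflection length `ℓ_T(w)`: the least number of reflections needed to write `w`. -/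
noncomputable def reflLen (w : W) : ℕ :=
  sInf {k | ∃ l : List W, l.length = k ∧ (∀ t ∈ l, cs.IsReflection t) ∧ l.prod = w}

/-- The absolute order: `u ≤ v` iff `ℓ_T(u) + ℓ_T(u⁻¹ v) = ℓ_T(v)`. -/
def absLe (u v : W) : Prop := reflLen cs u + reflLen cs (u⁻¹ * v) = reflLen cs v

lemma reflLen_spec (w : W) :
    ∃ l : List W, l.length = reflLen cs w ∧ (∀ t ∈ l, cs.IsReflection t) ∧ l.prod = w := by
  have hne :
      {k | ∃ l : List W, l.length = k ∧ (∀ t ∈ l, cs.IsReflection t) ∧ l.prod = w}.Nonempty := by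
    obtain ⟨ω, rfl⟩ := cs.wordProd_surjective w
    refine ⟨ω.length, ω.map cs.simple, List.length_map _, ?_, rfl⟩
    simp only [List.mem_map]
    rintro t ⟨i, -, rfl⟩
    exact cs.isReflection_simple i
  exact Nat.sInf_mem hne

lemma reflLen_le {w : W} {l : List W} (hl : ∀ t ∈ l, cs.IsReflection t) (hw : l.prod = w) :
    reflLen cs w ≤ l.length :=
  Nat.sInf_le ⟨l, rfl, hl, hw⟩

lemma reflLen_inv_le (w : W) : reflLen cs w⁻¹ ≤ reflLen cs w := by
  obtain ⟨l, hlen, hl, rfl⟩ := reflLen_spec cs w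
  have hmap : l.map (fun t => t⁻¹) = l :=
    (List.map_congr_left fun t ht => (hl t ht).inv).trans l.map_id
  rw [← hlen, List.prod_inv_reverse, hmap, ← List.length_reverse]
  exact reflLen_le cs (fun t ht => hl t (List.mem_reverse.mp ht)) rfl

@[simp]
lemma reflLen_inv (w : W) : reflLen cs w⁻¹ = reflLen cs w :=
  le_antisymm (reflLen_inv_le cs w) (by simpa using reflLen_inv_le cs w⁻¹)

lemma reflLen_conj_le (x w : W) : reflLen cs (x * w * x⁻¹) ≤ reflLen cs w := by
  obtain ⟨l, hlen, hl, rfl⟩ := reflLen_spec cs w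
  rw [← hlen, ← MulAut.conj_apply, map_list_prod, ← List.length_map (MulAut.conj x)]
  refine reflLen_le cs ?_ rfl
  simp only [List.mem_map, MulAut.conj_apply]
  rintro t ⟨s, hs, rfl⟩
  exact (hl s hs).conj x

@[simp]
lemma reflLen_conj (x w : W) : reflLen cs (x * w * x⁻¹) = reflLen cs w := by
  refine le_antisymm (reflLen_conj_le cs x w) ?_
  simpa [mul_assoc] using reflLen_conj_le cs x⁻¹ (x * w * x⁻¹)

section BipartiteMap

variable {cs} {a b : W}

lemma reflLen_mul_mul (ha : a * a = 1) (hb : b * b = 1) (w : W) :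
    reflLen cs (a * w * b) = reflLen cs (w⁻¹ * (a * b)) := by
  have hconj : a * w * b = (b * (w⁻¹ * (a * b)) * b⁻¹)⁻¹ := by
    simp [mul_assoc, inv_eq_of_mul_eq_one_right ha, inv_eq_of_mul_eq_one_right hb, hb]
  rw [hconj, reflLen_inv, reflLen_conj]

lemma reflLen_inv_mul_mul_mul (u v : W) :
    reflLen cs ((a * v * b)⁻¹ * (a * u * b)) = reflLen cs (u⁻¹ * v) := by
  have hconj : (a * v * b)⁻¹ * (a * u * b) = b⁻¹ * (u⁻¹ * v)⁻¹ * b⁻¹⁻¹ := by group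
  rw [hconj, reflLen_conj, reflLen_inv]

lemma absLe_mul_mul (ha : a * a = 1) (hb : b * b = 1) {w : W} (hw : absLe cs w (a * b)) :
    absLe cs (a * w * b) (a * b) := by
  have hrest : reflLen cs ((a * w * b)⁻¹ * (a * b)) = reflLen cs w := by
    simpa using reflLen_inv_mul_mul_mul (cs := cs) (a := a) (b := b) 1 w
  unfold absLe at hw ⊢
  rw [reflLen_mul_mul ha hb, hrest]
  omega

lemma absLe_mul_mul_of_absLe (ha : a * a = 1) (hb : b * b = 1) {u v : W}
    (hu : absLe cs u (a * b)) (hv : absLe cs v (a * b)) (huv : absLe cs u v) :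
    absLe cs (a * v * b) (a * u * b) := by
  unfold absLe at hu hv huv ⊢
  rw [reflLen_mul_mul ha hb, reflLen_mul_mul ha hb, reflLen_inv_mul_mul_mul]
  omega

end BipartiteMap

section CommutingSimples

variable {B : Type*} {N : CoxeterMatrix B} (cx : CoxeterSystem N W)

lemma commute_simple_of_eq_two {i j : B} (h : N i j = 2) :
    Commute (cx.simple i) (cx.simple j) := by
  have hsq := cx.simple_mul_simple_pow i j
  rw [h, pow_two] at hsq
  have hinv := eq_inv_of_mul_eq_one_left hsq
  rwa [mul_inv_rev, cx.inv_simple, cx.inv_simple] at hinv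

lemma wordProd_mul_self_of_eq_two {ω : List B} (h : ∀ i ∈ ω, ∀ j ∈ ω, i ≠ j → N i j = 2) :
    cx.wordProd ω * cx.wordProd ω = 1 := by
  have hcomm : (ω.map cx.simple).Pairwise Commute := by
    refine List.pairwise_of_forall_mem_list ?_
    simp only [List.mem_map]
    rintro _ ⟨i, hi, rfl⟩ _ ⟨j, hj, rfl⟩
    rcases eq_or_ne i j with rfl | hij
    · exact Commute.refl _
    · exact commute_simple_of_eq_two cx (h i hi j hj hij)
  have hrev : cx.wordProd ω.reverse = cx.wordProd ω := by
    simp only [CoxeterSystem.wordProd, List.map_reverse]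
    exact ((List.reverse_perm _).symm.prod_eq' hcomm).symm
  rw [← mul_inv_cancel (cx.wordProd ω), ← cx.wordProd_reverse, hrev]

end CommutingSimples

theorem stmt_4 (P : Fin n → Bool)
    (hbip : ∀ i j : Fin n, i ≠ j → P i = P j → M i j = 2)
    (cp cm c : W)
    (hcp : cp = cs.wordProd ((List.finRange n).filter (fun i => P i)))
    (hcm : cm = cs.wordProd ((List.finRange n).filter (fun i => !P i)))
    (hc : c = cp * cm) :
    (∀ w : W, absLe cs w c → absLe cs (cp * w * cm) c) ∧
    (∀ w : W, absLe cs w c → cp * (cp * w * cm) * cm = w) ∧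
    (∀ u v : W, absLe cs u c → absLe cs v c → absLe cs u v →
      absLe cs (cp * v * cm) (cp * u * cm)) := by
  have hcp2 : cp * cp = 1 := hcp ▸ wordProd_mul_self_of_eq_two cs fun i hi j hj hij =>
    hbip i j hij (by simp_all)
  have hcm2 : cm * cm = 1 := hcm ▸ wordProd_mul_self_of_eq_two cs fun i hi j hj hij =>
    hbip i j hij (by simp_all)
  subst hc
  refine ⟨fun w => absLe_mul_mul hcp2 hcm2, fun w _ => ?_,
    fun u v => absLe_mul_mul_of_absLe hcp2 hcm2⟩
  rw [mul_assoc, mul_assoc, hcm2, mul_one, ← mul_assoc, hcp2, one_mul]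

end Stmt4
end

section
/- Let W be an irreducible finite real reflection group acting on V, X ∈ L(W) a flat, w ∈ W with Z = Fix(w), and let χ be a class function on the parabolic subgroup W_X that depends only on the flat Fix(·) (i.e., χ(u) depends only on Fix(u) ∩ X-relative data). Then the induced character evaluates as (Ind_{W_X}^W χ)(w) = [N(W_X):W_X] · ∑_{Y ∈ L(W), Y ∼ X, Y ⊆ Z} χ_Y(w), where χ_Y is the corresponding function on W_Y transported by any group element carrying X to Y, N(W_X) is the normalizer of W_X in W, and Y ∼ X means Y and X are in the same W-orbit. -/
/-!
Write `N = Stab_W(X)` for the setwise stabilizer and `W_X ≤ N` for the pointwise one. The summand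
at `x ∈ W` is nonzero only if `X ≤ Fix(x⁻¹ w x)`, i.e. `x • X ≤ Fix(w)`, and then it equals
`χ_{x • X}(w)`: `τ (x • X)⁻¹ * x` lies in `N` and `χ` is `N`-conjugation invariant. So the
summand only depends on `x • X`, and by orbit–stabilizer each `Y ∼ X` is hit by exactly `|N|`
elements `x`. Lagrange makes `|W_X|` divide `|N|`.
-/

namespace Stmt13

variable {V : Type*} [NormedAddCommGroup V] [InnerProductSpace ℝ V] [FiniteDimensional ℝ V]

/-- The orthogonal reflection of `V` in the hyperplane orthogonal to `a`. -/
noncomputable def hypRefl (a : V) : V ≃ₗᵢ[ℝ] V := Submodule.reflection ((ℝ ∙ a)ᗮ)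

/-- The fixed subspace `Fix(g) = ker(g − I)`. -/
noncomputable def fixS (g : V ≃ₗᵢ[ℝ] V) : Submodule ℝ V :=
  LinearMap.ker (g.toLinearEquiv.toLinearMap - (LinearMap.id : V →ₗ[ℝ] V))

section Orbits

open MulAction

variable {G α : Type*} [Group G] [MulAction G α]

theorem finsum_smul_eq_card_stabilizer_nsmul {M : Type*} [AddCommMonoid M] [Finite G]
    (a : α) (f : α → M) :
    ∑ᶠ g : G, f (g • a) = Nat.card (stabilizer G a) • ∑ᶠ b ∈ orbit G a, f b := by
  classical
  have := Fintype.ofFinite G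
  have : Finite (orbit G a) := Set.finite_range _
  have := Fintype.ofFinite (orbit G a)
  rw [← finsum_set_coe_eq_finsum_mem, finsum_eq_sum_of_fintype, finsum_eq_sum_of_fintype]
  calc ∑ g : G, f (g • a)
      = ∑ p : (G ⧸ stabilizer G a) × stabilizer G a, f (ofQuotientStabilizer G a p.1) :=
        Fintype.sum_equiv Subgroup.groupEquivQuotientProdSubgroup _ _ fun _ => rfl
    _ = Nat.card (stabilizer G a) • ∑ q : G ⧸ stabilizer G a, f (ofQuotientStabilizer G a q) := by
        rw [Fintype.sum_prod_type, Finset.smul_sum]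
        simp only [Finset.sum_const, Finset.card_univ, Fintype.card_eq_nat_card]
    _ = Nat.card (stabilizer G a) • ∑ b : orbit G a, f b := by
        congr 1
        exact Fintype.sum_equiv (orbitEquivQuotientStabilizer G a).symm _ _ fun _ => rfl

theorem apply_conj_eq_of_smul_eq {β : Type*} {W : Subgroup G} {X : α} {χ : G → β}
    (hχ : ∀ y ∈ W, y • X = X → ∀ u, χ (y⁻¹ * u * y) = χ u)
    {t x : G} (ht : t ∈ W) (hx : x ∈ W) (htx : t • X = x • X) (w : G) :
    χ (t⁻¹ * w * t) = χ (x⁻¹ * w * x) := by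
  have hy : (t⁻¹ * x) • X = X := by rw [mul_smul, ← htx, inv_smul_smul]
  rw [← hχ _ (mul_mem (inv_mem ht) hx) hy]
  congr 1
  group

theorem mem_orbit_subgroup_iff {H : Subgroup G} {a b : α} :
    b ∈ orbit H a ↔ ∃ g ∈ H, g • a = b := by
  simp only [mem_orbit_iff, Subtype.exists, Subgroup.mk_smul, exists_prop]

end Orbits

section Subspaces

variable {E : Type*} [NormedAddCommGroup E] [InnerProductSpace ℝ E]

instance : MulAction (E ≃ₗᵢ[ℝ] E) (Submodule ℝ E) where
  smul g X := X.map g.toLinearEquiv.toLinearMap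
  one_smul := Submodule.map_id
  mul_smul g h X := Submodule.map_comp h.toLinearEquiv.toLinearMap g.toLinearEquiv.toLinearMap X

theorem mem_fixS {g : E ≃ₗᵢ[ℝ] E} {v : E} : v ∈ fixS g ↔ g v = v := by
  simp [fixS, sub_eq_zero]

theorem le_fixS_conj_iff {X : Submodule ℝ E} {x w : E ≃ₗᵢ[ℝ] E} :
    X ≤ fixS (x⁻¹ * w * x) ↔ x • X ≤ fixS w := by
  constructor
  · rintro h _ ⟨v, hv, rfl⟩
    exact mem_fixS.2 (x.symm_apply_eq.1 (mem_fixS.1 (h hv)))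
  · intro h v hv
    exact mem_fixS.2 (x.symm_apply_eq.2 (mem_fixS.1 (h ⟨v, hv, rfl⟩)))

def pointwiseStabilizer (X : Submodule ℝ E) : Subgroup (E ≃ₗᵢ[ℝ] E) where
  carrier := {g | X ≤ fixS g}
  one_mem' _ _ := mem_fixS.2 rfl
  mul_mem' hg hh v hv := mem_fixS.2 <| by
    rw [LinearIsometryEquiv.coe_mul, Function.comp_apply, mem_fixS.1 (hh hv), mem_fixS.1 (hg hv)]
  inv_mem' {g} hg v hv := mem_fixS.2 (g.symm_apply_eq.2 (mem_fixS.1 (hg hv)).symm)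

theorem pointwiseStabilizer_le_stabilizer (X : Submodule ℝ E) :
    pointwiseStabilizer X ≤ MulAction.stabilizer _ X := by
  intro g hg
  ext v
  constructor
  · rintro ⟨u, hu, rfl⟩
    show g u ∈ X
    rwa [mem_fixS.1 (hg hu)]
  · exact fun hv => ⟨v, hv, mem_fixS.1 (hg hv)⟩

open Classical in
theorem ite_conj_eq_indicator_smul {β : Type*} [Zero β] {W : Subgroup (E ≃ₗᵢ[ℝ] E)}
    {X : Submodule ℝ E} {χ : (E ≃ₗᵢ[ℝ] E) → β}
    (hχ : ∀ y ∈ W, y • X = X → ∀ u, χ (y⁻¹ * u * y) = χ u) {w : E ≃ₗᵢ[ℝ] E} (hw : w ∈ W)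
    {τ : Submodule ℝ E → E ≃ₗᵢ[ℝ] E} {x : E ≃ₗᵢ[ℝ] E} (hx : x ∈ W)
    (hτW : τ (x • X) ∈ W) (hτX : τ (x • X) • X = x • X) :
    (if x⁻¹ * w * x ∈ W ∧ X ≤ fixS (x⁻¹ * w * x) then χ (x⁻¹ * w * x) else 0) =
      {Y | Y ≤ fixS w}.indicator (fun Y => χ ((τ Y)⁻¹ * w * τ Y)) (x • X) := by
  have hconj : x⁻¹ * w * x ∈ W := mul_mem (mul_mem (inv_mem hx) hw) hx
  simp only [Set.indicator_apply, Set.mem_ofPred_eq, le_fixS_conj_iff, hconj, true_and,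
    apply_conj_eq_of_smul_eq hχ hτW hx hτX]

end Subspaces

open Classical in
theorem stmt_13_general (W : Subgroup (V ≃ₗᵢ[ℝ] V)) [Finite W]
    (X : Submodule ℝ V)
    (χ : (V ≃ₗᵢ[ℝ] V) → ℂ)
    (hχ : ∀ y : V ≃ₗᵢ[ℝ] V, y ∈ W → X.map y.toLinearEquiv.toLinearMap = X →
      ∀ u : V ≃ₗᵢ[ℝ] V, χ (y⁻¹ * u * y) = χ u)
    (w : V ≃ₗᵢ[ℝ] V) (hw : w ∈ W)
    (τ : Submodule ℝ V → (V ≃ₗᵢ[ℝ] V))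
    (hτ : ∀ Y : Submodule ℝ V, (∃ y ∈ W, X.map y.toLinearEquiv.toLinearMap = Y) →
      τ Y ∈ W ∧ X.map (τ Y).toLinearEquiv.toLinearMap = Y) :
    (Nat.card {g : V ≃ₗᵢ[ℝ] V | g ∈ W ∧ X ≤ fixS g} : ℂ)⁻¹ *
        ∑ᶠ x ∈ (W : Set (V ≃ₗᵢ[ℝ] V)),
          (if x⁻¹ * w * x ∈ W ∧ X ≤ fixS (x⁻¹ * w * x) then χ (x⁻¹ * w * x) else 0)
      = ((Nat.card {g : V ≃ₗᵢ[ℝ] V | g ∈ W ∧ X.map g.toLinearEquiv.toLinearMap = X} /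
            Nat.card {g : V ≃ₗᵢ[ℝ] V | g ∈ W ∧ X ≤ fixS g} : ℕ) : ℂ) *
          ∑ᶠ Y ∈ {Y : Submodule ℝ V |
              (∃ y ∈ W, X.map y.toLinearEquiv.toLinearMap = Y) ∧ Y ≤ fixS w},
            χ ((τ Y)⁻¹ * w * τ Y) := by
  set h := {Y : Submodule ℝ V | Y ≤ fixS w}.indicator fun Y => χ ((τ Y)⁻¹ * w * τ Y)
  have hLHS : ∑ᶠ x ∈ (W : Set (V ≃ₗᵢ[ℝ] V)),
      (if x⁻¹ * w * x ∈ W ∧ X ≤ fixS (x⁻¹ * w * x) then χ (x⁻¹ * w * x) else 0) =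
      Nat.card {g : V ≃ₗᵢ[ℝ] V | g ∈ W ∧ X.map g.toLinearEquiv.toLinearMap = X} •
        ∑ᶠ Y ∈ MulAction.orbit W X, h Y := by
    rw [finsum_mem_congr rfl fun x hx => ite_conj_eq_indicator_smul hχ hw hx
      (hτ _ ⟨x, hx, rfl⟩).1 (hτ _ ⟨x, hx, rfl⟩).2, ← finsum_set_coe_eq_finsum_mem]
    exact (finsum_smul_eq_card_stabilizer_nsmul (G := W) X h).trans <| congrArg (· • _) <|
      Nat.card_congr (Equiv.subtypeSubtypeEquivSubtypeInter (· ∈ W) fun g => g • X = X)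
  have hRHS : ∑ᶠ Y ∈ {Y : Submodule ℝ V |
        (∃ y ∈ W, X.map y.toLinearEquiv.toLinearMap = Y) ∧ Y ≤ fixS w}, χ ((τ Y)⁻¹ * w * τ Y) =
      ∑ᶠ Y ∈ MulAction.orbit W X, h Y := by
    rw [finsum_mem_def, finsum_mem_def, Set.indicator_indicator]
    congr! 3
    ext Y
    exact and_congr_left' mem_orbit_subgroup_iff.symm
  have hdvd : Nat.card {g : V ≃ₗᵢ[ℝ] V | g ∈ W ∧ X ≤ fixS g} ∣
      Nat.card {g : V ≃ₗᵢ[ℝ] V | g ∈ W ∧ X.map g.toLinearEquiv.toLinearMap = X} :=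
    Subgroup.card_dvd_of_le (inf_le_inf_left W (pointwiseStabilizer_le_stabilizer X))
  rw [hLHS, hRHS, Nat.cast_div_charZero hdvd, nsmul_eq_mul]
  ring

open Classical in
/-- Let `W` be a finite real reflection group on `V`, `X ∈ L(W)` a flat, `w ∈ W` with
`Z = Fix(w)`, and `χ` a class function on the parabolic subgroup
`W_X = {g ∈ W : X ⊆ Fix(g)}` depending only on the flat `Fix(·)` and invariant under
conjugation by the stabilizer of `X`.  Then the induced character evaluates as
`(Ind_{W_X}^W χ)(w) = [N(W_X):W_X] · ∑_{Y ∈ L(W), Y ∼ X, Y ⊆ Z} χ_Y(w)`, where `χ_Y` is the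
transport of `χ` by any group element `τ Y ∈ W` carrying `X` to `Y`, `N(W_X)` is the
normalizer of `W_X` in `W` (= the setwise stabilizer of `X`), and `Y ∼ X` means that `Y` and
`X` are in the same `W`-orbit. -/
theorem stmt_13 (W : Subgroup (V ≃ₗᵢ[ℝ] V)) [Finite W]
    (hgen : W = Subgroup.closure
      {g : V ≃ₗᵢ[ℝ] V | g ∈ W ∧ ∃ a : V, a ≠ 0 ∧ g = hypRefl a})
    (X : Submodule ℝ V) (hX : ∃ g ∈ W, fixS g = X)
    (χ : (V ≃ₗᵢ[ℝ] V) → ℂ)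
    (hflat : ∀ u₁ u₂ : V ≃ₗᵢ[ℝ] V, u₁ ∈ W → u₂ ∈ W → fixS u₁ = fixS u₂ → χ u₁ = χ u₂)
    (hχ : ∀ y : V ≃ₗᵢ[ℝ] V, y ∈ W → X.map y.toLinearEquiv.toLinearMap = X →
      ∀ u : V ≃ₗᵢ[ℝ] V, χ (y⁻¹ * u * y) = χ u)
    (w : V ≃ₗᵢ[ℝ] V) (hw : w ∈ W)
    (τ : Submodule ℝ V → (V ≃ₗᵢ[ℝ] V))
    (hτ : ∀ Y : Submodule ℝ V, (∃ y ∈ W, X.map y.toLinearEquiv.toLinearMap = Y) →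
      τ Y ∈ W ∧ X.map (τ Y).toLinearEquiv.toLinearMap = Y) :
    (Nat.card {g : V ≃ₗᵢ[ℝ] V | g ∈ W ∧ X ≤ fixS g} : ℂ)⁻¹ *
        ∑ᶠ x ∈ (W : Set (V ≃ₗᵢ[ℝ] V)),
          (if x⁻¹ * w * x ∈ W ∧ X ≤ fixS (x⁻¹ * w * x) then χ (x⁻¹ * w * x) else 0)
      = ((Nat.card {g : V ≃ₗᵢ[ℝ] V | g ∈ W ∧ X.map g.toLinearEquiv.toLinearMap = X} /
            Nat.card {g : V ≃ₗᵢ[ℝ] V | g ∈ W ∧ X ≤ fixS g} : ℕ) : ℂ) *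
          ∑ᶠ Y ∈ {Y : Submodule ℝ V |
              (∃ y ∈ W, X.map y.toLinearEquiv.toLinearMap = Y) ∧ Y ≤ fixS w},
            χ ((τ Y)⁻¹ * w * τ Y) :=
  stmt_13_general W X χ hχ w hw τ hτ

end Stmt13
end
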